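/- For the rooted binary trees T_a = (((5,(6,4)),3),((1,(8,2)),7)) and T_b = (((7,((4,2),6)),3),(8,(1,5))) on taxon set {1,…,8}: the maximum over all characters f using at most 2 states of (l_f(T_b) − l_f(T_a)) equals 3, and the maximum over all characters f using at most 2 states of (l_f(T_a) − l_f(T_b)) equals 2. Consequently d^2_MP(T_a,T_b) = 3, and for every character f using at most 2 states attaining d^2_MP(T_a,T_b) one has l_f(T_a) < l_f(T_b). -/

import Mathlib

namespace MPDist

/-- A rooted binary phylogenetic tree: leaves are labelled by taxa,
every internal vertex (including the root) has exactly two children. -/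
inductive PTree (X : Type) : Type
  | leaf : X → PTree X
  | node : PTree X → PTree X → PTree X

namespace PTree

/-- The list of leaf labels (taxa) of a tree. -/
def leaves {X : Type} : PTree X → List X
  | .leaf x => [x]
  | .node l r => l.leaves ++ r.leaves

/-- Relabelling of taxa. -/
def map {X Y : Type} (φ : X → Y) : PTree X → PTree Y
  | .leaf x => .leaf (φ x)
  | .node l r => .node (l.map φ) (r.map φ)

end PTree

/-- `T` is a phylogenetic tree on the taxon set `X`:
its leaves are bijectively labelled by the elements of `X`. -/
def IsPhylo {X : Type} (T : PTree X) : Prop :=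
  T.leaves.Nodup ∧ ∀ x : X, x ∈ T.leaves

/-- A state-labelled binary tree (an extension assigns a state to every vertex). -/
inductive ETree (C : Type) : Type
  | leaf : C → ETree C
  | node : C → ETree C → ETree C → ETree C

namespace ETree

/-- The state at the root. -/
def root {C : Type} : ETree C → C
  | .leaf c => c
  | .node c _ _ => c

/-- The number of edges `{u,v}` with different states at the two endpoints
(substitutions/mutations). -/
def changes {C : Type} [DecidableEq C] : ETree C → ℕ
  | .leaf _ => 0
  | .node c l r =>
      ((if l.root = c then 0 else 1) + (if r.root = c then 0 else 1)) +
        (l.changes + r.changes)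

end ETree

/-- `g` is an extension of the character `f` to the tree `T`: it has the same
shape as `T`, assigns a state to every vertex, and agrees with `f` on the taxa. -/
inductive IsExtension {X C : Type} (f : X → C) : PTree X → ETree C → Prop
  | leaf (x : X) : IsExtension f (.leaf x) (.leaf (f x))
  | node {l r : PTree X} {gl gr : ETree C} (c : C) :
      IsExtension f l gl → IsExtension f r gr →
      IsExtension f (.node l r) (.node c gl gr)

/-- The parsimony score `l_f(T)`: the minimum number of mutation edges
over all extensions of `f` to `T`. -/
noncomputable def pscore {X C : Type} [DecidableEq C] (f : X → C) (T : PTree X) : ℕ :=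
  sInf { k : ℕ | ∃ g : ETree C, IsExtension f T g ∧ g.changes = k }

/-- The MP distance `d_MP(T1,T2) = max_f |l_f(T1) − l_f(T2)|`, the maximum taken
over all characters `f` on the taxon set (states drawn from `ℕ`). -/
noncomputable def dMP {X : Type} (T1 T2 : PTree X) : ℕ :=
  sSup { k : ℕ | ∃ f : X → ℕ, k = ((pscore f T1 : ℤ) - (pscore f T2 : ℤ)).natAbs }

/-- `d^i_MP(T1,T2)`: as `dMP`, but over characters using at most `i` states. -/
noncomputable def dMPk {X : Type} (i : ℕ) (T1 T2 : PTree X) : ℕ :=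
  sSup { k : ℕ | ∃ f : X → Fin i, k = ((pscore f T1 : ℤ) - (pscore f T2 : ℤ)).natAbs }

/-- `max_f (l_f(T2) − l_f(T1))` over all characters `f`. -/
noncomputable def maxDiff {X : Type} (T1 T2 : PTree X) : ℤ :=
  sSup { d : ℤ | ∃ f : X → ℕ, d = (pscore f T2 : ℤ) - (pscore f T1 : ℤ) }

/-- `max_f (l_f(T2) − l_f(T1))` over all characters `f` with at most `i` states. -/
noncomputable def maxDiffk {X : Type} (i : ℕ) (T1 T2 : PTree X) : ℤ :=
  sSup { d : ℤ | ∃ f : X → Fin i, d = (pscore f T2 : ℤ) - (pscore f T1 : ℤ) }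

/-- `gap(T1,T2) = |max_f(l_f(T2)−l_f(T1)) − max_f(l_f(T1)−l_f(T2))|`. -/
noncomputable def gap {X : Type} (T1 T2 : PTree X) : ℤ :=
  |maxDiff T1 T2 - maxDiff T2 T1|

/-- `gap` restricted to characters with at most `i` states. -/
noncomputable def gapk {X : Type} (i : ℕ) (T1 T2 : PTree X) : ℤ :=
  |maxDiffk i T1 T2 - maxDiffk i T2 T1|

/-- `s` occurs as a (rooted) subtree of `t`. -/
inductive IsSubtree {X : Type} : PTree X → PTree X → Prop
  | refl (t : PTree X) : IsSubtree t t
  | left {s l r : PTree X} : IsSubtree s l → IsSubtree s (.node l r)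
  | right {s l r : PTree X} : IsSubtree s r → IsSubtree s (.node l r)

/-- Taxa `a`, `b` form a cherry of `T`: they are leaves with a common parent. -/
def IsCherry {X : Type} (T : PTree X) (a b : X) : Prop :=
  IsSubtree (.node (.leaf a) (.leaf b)) T

/-- Relabel a tree on taxa `ℕ` by shifting all labels up by `s` (fresh copies). -/
def shiftT (s : ℕ) (T : PTree ℕ) : PTree ℕ := T.map (fun x => x + s)

/-- `T_a = (((((2,3),4),5),6),1)` on taxa `{1,…,6}` (taxon `j` encoded as `j-1`). -/
def Ta6 : PTree ℕ :=
  .node (.node (.node (.node (.node (.leaf 1) (.leaf 2)) (.leaf 3)) (.leaf 4)) (.leaf 5)) (.leaf 0)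

/-- `T_b = ((((2,6),(3,4)),5),1)` on taxa `{1,…,6}` (taxon `j` encoded as `j-1`). -/
def Tb6 : PTree ℕ :=
  .node (.node (.node (.node (.leaf 1) (.leaf 5)) (.node (.leaf 2) (.leaf 3))) (.leaf 4)) (.leaf 0)

/-- `T_A`: two disjoint copies of `T_a` joined under a new root (12 taxa). -/
def TA12 : PTree ℕ := .node Ta6 (shiftT 6 Ta6)

/-- `T_B`: two disjoint copies of `T_b` joined under a new root (12 taxa). -/
def TB12 : PTree ℕ := .node Tb6 (shiftT 6 Tb6)

/-- `TkA k` is the tree `T^{k+1}_A`: `k+1` disjoint copies of `T_A` arranged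
along a caterpillar backbone (so `TkA 0 = T^1_A = T_A`). -/
def TkA : ℕ → PTree ℕ
  | 0 => TA12
  | k+1 => .node (TkA k) (shiftT (12*(k+1)) TA12)

/-- `TkB k` is the tree `T^{k+1}_B`. -/
def TkB : ℕ → PTree ℕ
  | 0 => TB12
  | k+1 => .node (TkB k) (shiftT (12*(k+1)) TB12)

/-- `T_a = (((5,(6,4)),3),((1,(8,2)),7))` on taxa `{1,…,8}` (taxon `j` encoded as `j-1`). -/
def Ta8 : PTree ℕ :=
  .node (.node (.node (.leaf 4) (.node (.leaf 5) (.leaf 3))) (.leaf 2))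
        (.node (.node (.leaf 0) (.node (.leaf 7) (.leaf 1))) (.leaf 6))

/-- `T_b = (((7,((4,2),6)),3),(8,(1,5)))` on taxa `{1,…,8}` (taxon `j` encoded as `j-1`). -/
def Tb8 : PTree ℕ :=
  .node (.node (.node (.leaf 6) (.node (.node (.leaf 3) (.leaf 1)) (.leaf 5))) (.leaf 2))
        (.node (.leaf 7) (.node (.leaf 0) (.leaf 4)))

/-- `T_A` (2-state construction): two disjoint copies of `T_a` under a new root (16 taxa). -/
def TA16 : PTree ℕ := .node Ta8 (shiftT 8 Ta8)

/-- `T_B` (2-state construction): two disjoint copies of `T_b` under a new root (16 taxa). -/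
def TB16 : PTree ℕ := .node Tb8 (shiftT 8 Tb8)

/-- `T_AA`: two disjoint copies of `T_A` under a new root (32 taxa). -/
def TAA : PTree ℕ := .node TA16 (shiftT 16 TA16)

/-- `T_BB`: two disjoint copies of `T_B` under a new root (32 taxa). -/
def TBB : PTree ℕ := .node TB16 (shiftT 16 TB16)

/-- `TkAA k` is the tree `T^{k+1}_AA` (so `TkAA 0 = T^1_AA = T_AA`). -/
def TkAA : ℕ → PTree ℕ
  | 0 => TAA
  | k+1 => .node (TkAA k) (shiftT (32*(k+1)) TAA)

/-- `TkBB k` is the tree `T^{k+1}_BB`. -/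
def TkBB : ℕ → PTree ℕ
  | 0 => TBB
  | k+1 => .node (TkBB k) (shiftT (32*(k+1)) TBB)

/-! Sankoff's dynamic programme computes the parsimony score exactly, so for two-state
characters, which matter only on the eight taxa, the bounds `l_f(T_b) ≤ l_f(T_a) + 3` and
`l_f(T_a) ≤ l_f(T_b) + 2` are a finite computation over `2^8` characters. Both are sharp: the
character marking the taxa `{3,4,5,6}` scores 1 on `T_a` and 4 on `T_b`, the one marking
`{3,6,7,8}` scores 4 on `T_a` and 2 on `T_b`. -/

section Sankoff

variable {X C : Type}

theorem IsExtension.congr {f f' : X → C} {T : PTree X} {g : ETree C}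
    (hg : IsExtension f T g) (h : ∀ x ∈ T.leaves, f x = f' x) : IsExtension f' T g := by
  induction hg with
  | leaf x => rw [h x (by simp [PTree.leaves])]; exact .leaf x
  | node c _ _ ihl ihr =>
    exact .node c (ihl fun x hx => h x (by simp [PTree.leaves, hx]))
      (ihr fun x hx => h x (by simp [PTree.leaves, hx]))

variable [DecidableEq C]

theorem pscore_congr {f f' : X → C} {T : PTree X} (h : ∀ x ∈ T.leaves, f x = f' x) :
    pscore f T = pscore f' T := by
  have hext : ∀ g, IsExtension f T g ↔ IsExtension f' T g := fun g =>
    ⟨fun hg => hg.congr h, fun hg => hg.congr fun x hx => (h x hx).symm⟩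
  simp only [pscore, hext]

def ETree.changesBelow (g : ETree C) (c : C) : ℕ :=
  (if g.root = c then 0 else 1) + g.changes

theorem ETree.changesBelow_root (g : ETree C) : g.changesBelow g.root = g.changes := by
  simp [ETree.changesBelow]

theorem ETree.changesBelow_node (c d : C) (gl gr : ETree C) :
    (ETree.node d gl gr).changesBelow c =
      (if d = c then 0 else 1) + (gl.changesBelow d + gr.changesBelow d) := by
  show (if d = c then 0 else 1) + _ = _
  simp only [ETree.changes, ETree.changesBelow]
  ring

variable [Fintype C] [Nonempty C]

/-- Sankoff's recursion: `sankoff f T c` is the least value of `g.changesBelow c` over the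
extensions `g` of `f` to `T`. -/
def sankoff (f : X → C) : PTree X → C → ℕ
  | .leaf x, c => if f x = c then 0 else 1
  | .node l r, c => Finset.univ.inf' Finset.univ_nonempty fun d =>
      (if d = c then 0 else 1) + (sankoff f l d + sankoff f r d)

theorem sankoff_le_changesBelow {f : X → C} {T : PTree X} {g : ETree C}
    (hg : IsExtension f T g) (c : C) : sankoff f T c ≤ g.changesBelow c := by
  induction hg generalizing c with
  | leaf x => exact le_rfl
  | @node l r gl gr d _ _ ihl ihr =>
    calc sankoff f (.node l r) c ≤ (if d = c then 0 else 1) + (sankoff f l d + sankoff f r d) :=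
          Finset.inf'_le _ (Finset.mem_univ d)
      _ ≤ (if d = c then 0 else 1) + (gl.changesBelow d + gr.changesBelow d) := by
          gcongr <;> simp only [ihl, ihr]
      _ = (ETree.node d gl gr).changesBelow c := (ETree.changesBelow_node c d gl gr).symm

theorem exists_changesBelow_eq_sankoff (f : X → C) (T : PTree X) (c : C) :
    ∃ g, IsExtension f T g ∧ g.changesBelow c = sankoff f T c := by
  induction T generalizing c with
  | leaf x => exact ⟨.leaf (f x), .leaf x, rfl⟩
  | node l r ihl ihr =>
    obtain ⟨d, -, hd⟩ := Finset.exists_mem_eq_inf' Finset.univ_nonempty fun d =>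
      (if d = c then 0 else 1) + (sankoff f l d + sankoff f r d)
    obtain ⟨gl, hgl, hl⟩ := ihl d
    obtain ⟨gr, hgr, hr⟩ := ihr d
    refine ⟨.node d gl gr, .node d hgl hgr, ?_⟩
    rw [ETree.changesBelow_node, hl, hr, sankoff, hd]

def sankoffScore (f : X → C) (T : PTree X) : ℕ :=
  Finset.univ.inf' Finset.univ_nonempty (sankoff f T)

theorem pscore_eq_sankoffScore (f : X → C) (T : PTree X) : pscore f T = sankoffScore f T := by
  obtain ⟨c, -, hc⟩ := Finset.exists_mem_eq_inf' Finset.univ_nonempty (sankoff f T)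
  obtain ⟨g, hg, hgc⟩ := exists_changesBelow_eq_sankoff f T c
  have hmin : ∀ g', IsExtension f T g' → sankoffScore f T ≤ g'.changes := fun g' hg' =>
    calc sankoffScore f T ≤ sankoff f T g'.root := Finset.inf'_le _ (Finset.mem_univ _)
      _ ≤ g'.changes := (sankoff_le_changesBelow hg' _).trans_eq g'.changesBelow_root
  have hg_changes : g.changes = sankoffScore f T :=
    le_antisymm (le_of_add_le_right (hgc.trans hc.symm).le) (hmin g hg)
  refine le_antisymm (Nat.sInf_le ⟨g, hg, hg_changes⟩) (le_csInf ⟨_, g, hg, rfl⟩ ?_)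
  rintro _ ⟨g', hg', rfl⟩
  exact hmin g' hg'

theorem pscore_eq_sankoffScore_of_leaves_lt (k : ℕ) [NeZero k] (f : ℕ → C) {T : PTree ℕ}
    (hT : ∀ x ∈ T.leaves, x < k) :
    pscore f T = sankoffScore (fun n : ℕ => f (Fin.ofNat k n)) T := by
  rw [← pscore_eq_sankoffScore]
  refine pscore_congr fun x hx => ?_
  rw [Fin.val_ofNat, Nat.mod_eq_of_lt (hT x hx)]

end Sankoff

set_option maxRecDepth 10000 in
theorem sankoffScore_Ta8_Tb8_bounds : ∀ v : Fin 8 → Fin 2,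
    let f := fun n : ℕ => v (Fin.ofNat 8 n)
    sankoffScore f Tb8 ≤ sankoffScore f Ta8 + 3 ∧
      sankoffScore f Ta8 ≤ sankoffScore f Tb8 + 2 := by
  decide

theorem leaves_Ta8_lt : ∀ x ∈ Ta8.leaves, x < 8 := by decide

theorem leaves_Tb8_lt : ∀ x ∈ Tb8.leaves, x < 8 := by decide

theorem pscore_Tb8_le_pscore_Ta8_add_three (f : ℕ → Fin 2) :
    pscore f Tb8 ≤ pscore f Ta8 + 3 := by
  rw [pscore_eq_sankoffScore_of_leaves_lt 8 f leaves_Ta8_lt,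
    pscore_eq_sankoffScore_of_leaves_lt 8 f leaves_Tb8_lt]
  exact (sankoffScore_Ta8_Tb8_bounds fun i => f i).1

theorem pscore_Ta8_le_pscore_Tb8_add_two (f : ℕ → Fin 2) :
    pscore f Ta8 ≤ pscore f Tb8 + 2 := by
  rw [pscore_eq_sankoffScore_of_leaves_lt 8 f leaves_Ta8_lt,
    pscore_eq_sankoffScore_of_leaves_lt 8 f leaves_Tb8_lt]
  exact (sankoffScore_Ta8_Tb8_bounds fun i => f i).2

def marking (S : List ℕ) : ℕ → Fin 2 := fun n => if n ∈ S then 1 else 0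

theorem pscore_marking_2345 :
    pscore (marking [2, 3, 4, 5]) Ta8 = 1 ∧ pscore (marking [2, 3, 4, 5]) Tb8 = 4 := by
  simp only [pscore_eq_sankoffScore]
  decide

theorem pscore_marking_2567 :
    pscore (marking [2, 5, 6, 7]) Ta8 = 4 ∧ pscore (marking [2, 5, 6, 7]) Tb8 = 2 := by
  simp only [pscore_eq_sankoffScore]
  decide

/-- for `T_a = (((5,(6,4)),3),((1,(8,2)),7))` and
`T_b = (((7,((4,2),6)),3),(8,(1,5)))` and characters with at most 2 states:
`max_f (l_f(T_b) − l_f(T_a)) = 3`, `max_f (l_f(T_a) − l_f(T_b)) = 2`, hence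
`d^2_MP(T_a,T_b) = 3` and every optimal 2-state character `f` has
`l_f(T_a) < l_f(T_b)`. -/
theorem Ta8_Tb8_asymmetric :
    maxDiffk 2 Ta8 Tb8 = 3 ∧
    maxDiffk 2 Tb8 Ta8 = 2 ∧
    dMPk 2 Ta8 Tb8 = 3 ∧
    (∀ f : ℕ → Fin 2,
      ((pscore f Ta8 : ℤ) - (pscore f Tb8 : ℤ)).natAbs = dMPk 2 Ta8 Tb8 →
      pscore f Ta8 < pscore f Tb8) := by
  have hb := pscore_Tb8_le_pscore_Ta8_add_three
  have ha := pscore_Ta8_le_pscore_Tb8_add_two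
  obtain ⟨h3a, h3b⟩ := pscore_marking_2345
  obtain ⟨h2a, h2b⟩ := pscore_marking_2567
  have hd : dMPk 2 Ta8 Tb8 = 3 := by
    refine IsGreatest.csSup_eq ⟨⟨marking [2, 3, 4, 5], by rw [h3a, h3b]; rfl⟩, ?_⟩
    rintro _ ⟨f, rfl⟩
    have := hb f
    have := ha f
    omega
  refine ⟨IsGreatest.csSup_eq ⟨⟨marking [2, 3, 4, 5], by rw [h3a, h3b]; rfl⟩, ?_⟩,
    IsGreatest.csSup_eq ⟨⟨marking [2, 5, 6, 7], by rw [h2a, h2b]; rfl⟩, ?_⟩, hd, ?_⟩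
  · rintro _ ⟨f, rfl⟩
    have := hb f
    omega
  · rintro _ ⟨f, rfl⟩
    have := ha f
    omega
  · intro f hf
    rw [hd] at hf
    have := ha f
    omega

end MPDist
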